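/- arXiv:2404.04706 — 3 statements merged into one kernel-verified Lean document; each statement's English description precedes it below -/
import Mathlib

section
/- The Laplace mechanism is ε-differentially private: Let ε > 0 and let f : ℕ^𝒳 → ℝ^k be a vector of numeric queries with finite ℓ1 global sensitivity Δ₁(f) = sup over neighboring databases x, y of ∑_{j=1}^k |f_j(x) − f_j(y)|. The Laplace mechanism M_L, which on input database x outputs f(x) + (Z₁, …, Z_k) where the Z_j are independent random variables each distributed according to the Laplace distribution with density z ↦ (1/(2b)) · exp(−|z|/b) with scale b = Δ₁(f)/ε, is ε-differentially private. -/
open MeasureTheory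

/-- The ℓ1 distance `‖x - y‖₁` between databases `x y : 𝒳 →₀ ℕ`. -/
def dbDist {𝒳 : Type*} [DecidableEq 𝒳] (x y : 𝒳 →₀ ℕ) : ℕ :=
  (x.support ∪ y.support).sum fun a => ((x a : ℤ) - (y a : ℤ)).natAbs

/-- Databases `x` and `y` are neighboring if `‖x - y‖₁ ≤ 1`. -/
def Neighboring {𝒳 : Type*} [DecidableEq 𝒳] (x y : 𝒳 →₀ ℕ) : Prop :=
  dbDist x y ≤ 1

/-- A mechanism `M` is `(ε, δ)`-differentially private if for all measurable sets `S` and all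
neighboring databases `x, y`, `M x S ≤ e^ε * M y S + δ`. -/
def IsDP {𝒳 : Type*} [DecidableEq 𝒳] {Ω : Type*} [MeasurableSpace Ω]
    (M : (𝒳 →₀ ℕ) → Measure Ω) (ε δ : ℝ) : Prop :=
  ∀ x y : 𝒳 →₀ ℕ, Neighboring x y → ∀ S : Set Ω, MeasurableSet S →
    M x S ≤ ENNReal.ofReal (Real.exp ε) * M y S + ENNReal.ofReal δ

/-- The Laplace probability measure on ℝ with mean `0` and scale `b`, given by the
density `z ↦ (1/(2b)) exp (-|z|/b)` with respect to Lebesgue measure. -/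
noncomputable def laplaceMeasure (b : ℝ) : Measure ℝ :=
  volume.withDensity fun z => ENNReal.ofReal ((1 / (2 * b)) * Real.exp (-|z| / b))

/-- The Laplace mechanism for a vector-valued query `f : ℕ^𝒳 → ℝ^k` with noise scale `b`:
on input database `x` it outputs `f x + (Z 1, …, Z k)` where the `Z j` are independent
Laplace random variables of scale `b`. -/
noncomputable def laplaceMechanism {𝒳 : Type*} {k : ℕ} (f : (𝒳 →₀ ℕ) → (Fin k → ℝ))
    (b : ℝ) : (𝒳 →₀ ℕ) → Measure (Fin k → ℝ) :=
  fun x => (Measure.pi fun _ : Fin k => laplaceMeasure b).map fun z => f x + z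

/-!
By the triangle inequality the Laplace density `ρ_b(z) ∝ exp (-|z| / b)` satisfies
`ρ_b u ≤ exp (|u - v| / b) * ρ_b v`. The mechanism's output on `x` has Lebesgue density
`z ↦ ∏ j, ρ_b (z j - f x j)`, so the output densities on `x` and `y` differ pointwise by a factor
at most `exp (‖f x - f y‖₁ / b)`, which is `≤ e^ε` for neighbours when `b = Δ / ε`; integrating
this density bound over `S` gives the privacy inequality.
-/

open scoped ENNReal

namespace MeasureTheory

theorem lintegral_fin_nat_prod_eq_prod {n : ℕ} {E : Type*}
    {mE : MeasurableSpace E} {μ : Fin n → Measure E} [∀ i, SigmaFinite (μ i)]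
    {f : Fin n → E → ℝ≥0∞} (hf : ∀ i, Measurable (f i)) :
    ∫⁻ x : Fin n → E, ∏ i, f i (x i) ∂(Measure.pi μ) = ∏ i, ∫⁻ x, f i x ∂(μ i) := by
  induction n with
  | zero => simp
  | succ n ih =>
    have hf_succ : Measurable fun x : Fin n → E => ∏ i, f i.succ (x i) :=
      Finset.measurable_prod _ fun i _ => (hf i.succ).comp (measurable_pi_apply i)
    calc
      _ = ∫⁻ x : E × (Fin n → E), f 0 x.1 * ∏ i, f i.succ (x.2 i)
            ∂((μ 0).prod (Measure.pi fun i => μ i.succ)) := by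
        rw [← ((measurePreserving_piFinSuccAbove μ 0).symm).lintegral_comp_emb
          (MeasurableEquiv.measurableEmbedding _)]
        simp_rw [MeasurableEquiv.piFinSuccAbove_symm_apply, Fin.insertNthEquiv,
          Fin.prod_univ_succ, Fin.insertNth_zero, Equiv.coe_fn_mk, Fin.cons_succ,
          Fin.zero_succAbove, cast_eq, Fin.cons_zero]
      _ = (∫⁻ x, f 0 x ∂μ 0) * ∏ i : Fin n, ∫⁻ x, f i.succ x ∂(μ i.succ) := by
        rw [lintegral_prod_mul (hf 0).aemeasurable hf_succ.aemeasurable,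
          ih fun i => hf i.succ]
      _ = ∏ i, ∫⁻ x, f i x ∂(μ i) :=
        (Fin.prod_univ_succ fun i => ∫⁻ x, f i x ∂(μ i)).symm

theorem lintegral_fintype_prod_eq_prod {ι : Type*} [Fintype ι] {E : Type*}
    {mE : MeasurableSpace E} {μ : ι → Measure E} [∀ i, SigmaFinite (μ i)]
    {f : ι → E → ℝ≥0∞} (hf : ∀ i, Measurable (f i)) :
    ∫⁻ x : ι → E, ∏ i, f i (x i) ∂(Measure.pi μ) = ∏ i, ∫⁻ x, f i x ∂(μ i) := by
  let e := (Fintype.equivFin ι).symm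
  rw [← (measurePreserving_piCongrLeft _ e).lintegral_comp_emb
    (MeasurableEquiv.measurableEmbedding _)]
  simp_rw [← e.prod_comp, MeasurableEquiv.coe_piCongrLeft, Equiv.piCongrLeft_apply_apply]
  exact lintegral_fin_nat_prod_eq_prod fun i => hf (e i)

theorem Measure.pi_withDensity {ι : Type*} [Fintype ι] {E : Type*}
    {mE : MeasurableSpace E} {μ : ι → Measure E} [∀ i, SigmaFinite (μ i)]
    {f : ι → E → ℝ≥0∞} (hf : ∀ i, Measurable (f i))
    [∀ i, SigmaFinite ((μ i).withDensity (f i))] :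
    Measure.pi (fun i => (μ i).withDensity (f i)) =
      (Measure.pi μ).withDensity fun x => ∏ i, f i (x i) := by
  refine Measure.pi_eq fun s hs => ?_
  have h_indicator : (Set.univ.pi s).indicator (fun x => ∏ i, f i (x i)) =
      fun x => ∏ i, (s i).indicator (f i) (x i) := by
    classical
    ext x
    simp only [Set.indicator_apply, Set.mem_univ_pi, Finset.prod_ite_zero, Finset.mem_univ,
      true_implies]
  rw [withDensity_apply _ (.univ_pi hs), ← lintegral_indicator (.univ_pi hs), h_indicator,
    lintegral_fintype_prod_eq_prod fun i => (hf i).indicator (hs i)]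
  simp only [lintegral_indicator (hs _), withDensity_apply _ (hs _)]

theorem Measure.map_const_add_withDensity {G : Type*} [MeasurableSpace G] [AddGroup G]
    [MeasurableAdd G] (μ : Measure G) [μ.IsAddLeftInvariant] (g : G → ℝ≥0∞) (a : G) :
    (μ.withDensity g).map (a + ·) = μ.withDensity fun z => g (-a + z) := by
  ext s hs
  have hs' : MeasurableSet ((a + ·) ⁻¹' s) := measurable_const_add a hs
  rw [map_apply (measurable_const_add a) hs, withDensity_apply _ hs', withDensity_apply _ hs,
    ← lintegral_indicator hs', ← lintegral_indicator hs,
    ← lintegral_add_left_eq_self (s.indicator fun z => g (-a + z)) a]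
  classical
  congr 1 with z
  simp [Set.indicator_apply]

end MeasureTheory

noncomputable def laplaceDensity (b z : ℝ) : ℝ :=
  1 / (2 * b) * Real.exp (-|z| / b)

theorem laplaceDensity_le_exp_mul {b : ℝ} (hb : 0 ≤ b) (u v : ℝ) :
    laplaceDensity b u ≤ Real.exp (|u - v| / b) * laplaceDensity b v := by
  have h_exponent : -|u| / b ≤ |u - v| / b + -|v| / b := by
    rw [← add_div]
    gcongr
    linarith [abs_sub_abs_le_abs_sub v u, abs_sub_comm u v]
  calc laplaceDensity b u ≤ 1 / (2 * b) * Real.exp (|u - v| / b + -|v| / b) := by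
        unfold laplaceDensity; gcongr
    _ = Real.exp (|u - v| / b) * laplaceDensity b v := by
        rw [Real.exp_add, laplaceDensity]; ring

theorem measurable_laplaceDensity (b : ℝ) : Measurable (laplaceDensity b) := by
  unfold laplaceDensity; fun_prop

theorem pi_laplaceMeasure {ι : Type*} [Fintype ι] (b : ℝ) :
    Measure.pi (fun _ : ι => laplaceMeasure b) =
      volume.withDensity fun z => ∏ j, ENNReal.ofReal (laplaceDensity b (z j)) :=
  Measure.pi_withDensity fun _ => (measurable_laplaceDensity b).ennreal_ofReal

theorem laplaceMechanism_eq_withDensity {𝒳 : Type*} {k : ℕ} (f : (𝒳 →₀ ℕ) → (Fin k → ℝ))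
    (b : ℝ) (x : 𝒳 →₀ ℕ) :
    laplaceMechanism f b x =
      volume.withDensity fun z => ∏ j, ENNReal.ofReal (laplaceDensity b (z j - f x j)) := by
  simp only [laplaceMechanism, pi_laplaceMeasure, Measure.map_const_add_withDensity,
    Pi.add_apply, Pi.neg_apply, neg_add_eq_sub]

theorem laplaceMechanism_le_smul {𝒳 : Type*} {k : ℕ} (f : (𝒳 →₀ ℕ) → (Fin k → ℝ))
    {b : ℝ} (hb : 0 ≤ b) (x y : 𝒳 →₀ ℕ) :
    laplaceMechanism f b x ≤
      ENNReal.ofReal (Real.exp ((∑ j, |f x j - f y j|) / b)) • laplaceMechanism f b y := by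
  rw [laplaceMechanism_eq_withDensity, laplaceMechanism_eq_withDensity,
    ← withDensity_smul' _ _ ENNReal.ofReal_ne_top]
  refine withDensity_mono (ae_of_all _ fun z => ?_)
  have h_coord (j : Fin k) : ENNReal.ofReal (laplaceDensity b (z j - f x j)) ≤
      ENNReal.ofReal (Real.exp (|f x j - f y j| / b)) *
        ENNReal.ofReal (laplaceDensity b (z j - f y j)) := by
    rw [← ENNReal.ofReal_mul (Real.exp_nonneg _)]
    refine ENNReal.ofReal_le_ofReal ?_
    simpa only [sub_sub_sub_cancel_left, abs_sub_comm (f y j)] using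
      laplaceDensity_le_exp_mul hb (z j - f x j) (z j - f y j)
  calc ∏ j, ENNReal.ofReal (laplaceDensity b (z j - f x j))
      ≤ ∏ j, ENNReal.ofReal (Real.exp (|f x j - f y j| / b)) *
          ENNReal.ofReal (laplaceDensity b (z j - f y j)) :=
        Finset.prod_le_prod' fun j _ => h_coord j
    _ = _ := by
        rw [Finset.prod_mul_distrib, ← ENNReal.ofReal_prod_of_nonneg fun j _ => (Real.exp_nonneg _),
          ← Real.exp_sum, Finset.sum_div]
        rfl

/-- **The Laplace mechanism is `ε`-differentially private.** Let `ε > 0` and let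
`f : ℕ^𝒳 → ℝ^k` have ℓ1 global sensitivity (over neighboring databases) at most `Δ > 0`.
Then the Laplace mechanism with scale `b = Δ/ε` is `ε`-differentially private
(i.e. `(ε, 0)`-DP). -/
theorem laplaceMechanism_isDP {𝒳 : Type*} [DecidableEq 𝒳] {k : ℕ}
    (f : (𝒳 →₀ ℕ) → (Fin k → ℝ)) (ε Δ : ℝ) (hε : 0 < ε) (hΔ : 0 < Δ)
    (hsens : ∀ x y : 𝒳 →₀ ℕ, Neighboring x y → ∑ j, |f x j - f y j| ≤ Δ) :
    IsDP (laplaceMechanism f (Δ / ε)) ε 0 := by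
  intro x y hxy S _
  have hb : 0 < Δ / ε := div_pos hΔ hε
  have h_exponent : (∑ j, |f x j - f y j|) / (Δ / ε) ≤ ε :=
    div_le_of_le_mul₀ hb.le hε.le ((mul_div_cancel₀ Δ hε.ne').symm ▸ hsens x y hxy)
  calc laplaceMechanism f (Δ / ε) x S
      ≤ ENNReal.ofReal (Real.exp ((∑ j, |f x j - f y j|) / (Δ / ε))) *
          laplaceMechanism f (Δ / ε) y S :=
        Measure.le_iff'.1 (laplaceMechanism_le_smul f hb.le x y) S
    _ ≤ ENNReal.ofReal (Real.exp ε) * laplaceMechanism f (Δ / ε) y S := by gcongr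
    _ = ENNReal.ofReal (Real.exp ε) * laplaceMechanism f (Δ / ε) y S + ENNReal.ofReal 0 := by
        rw [ENNReal.ofReal_zero, add_zero]
end

section
/- Sensitivity of regularized empirical risk minimization: Fix n ∈ ℕ, λ > 0, a regularizer N : ℝ^d → ℝ that is differentiable and 1-strongly convex, and a loss ℓ : ℝ → [0,∞) that is convex and differentiable with |ℓ'(z)| ≤ 1 for all z ∈ ℝ. For a training set D = {(x_i, y_i)}_{i=1}^n with x_i ∈ ℝ^d, ‖x_i‖₂ ≤ 1, and y_i ∈ {−1, +1}, let f(D) = argmin_{w ∈ ℝ^d} [ (1/n) ∑_{i=1}^n ℓ(y_i · ⟨w, x_i⟩) + λ·N(w) ] (which exists and is unique by strong convexity). Then for any two training sets D and D' of size n differing in a single example, ‖f(D) − f(D')‖₂ ≤ 2/(n·λ). -/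
/-!
Both objectives `J D` and `J D'` are `λ`-strongly convex, so each grows at least quadratically,
`λ/2 ‖u - w‖²`, away from its minimizer. Adding the two growth inequalities at the other
minimizer gives `λ ‖w - w'‖² ≤ (J D - J D') w' - (J D - J D') w`. The two objectives differ only
in one summand `(ℓ(y ⟪·, x⟫) - ℓ(y' ⟪·, x'⟫)) / n`, which is `2/n`-Lipschitz since `|ℓ'| ≤ 1`,
`|y| = 1` and `‖x‖ ≤ 1`; hence `λ ‖w - w'‖² ≤ (2/n) ‖w - w'‖`.
-/

open Set Filter Topology

section ConvexSum

variable {𝕜 E β ι : Type*} [Semiring 𝕜] [PartialOrder 𝕜] [AddCommMonoid E] [SMul 𝕜 E]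
  [AddCommMonoid β] [PartialOrder β] [IsOrderedAddMonoid β] [Module 𝕜 β]

lemma ConvexOn.sum {s : Set E} (hs : Convex 𝕜 s) {t : Finset ι} {f : ι → E → β}
    (hf : ∀ i ∈ t, ConvexOn 𝕜 s (f i)) : ConvexOn 𝕜 s fun x => ∑ i ∈ t, f i x := by
  classical
  induction t using Finset.induction_on with
  | empty => simpa using convexOn_const 0 hs
  | insert i t hi ih =>
    simp only [Finset.sum_insert hi]
    exact (hf i (t.mem_insert_self i)).add (ih fun j hj => hf j (Finset.mem_insert_of_mem hj))

end ConvexSum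

section StrongConvexity

variable {E : Type*} [NormedAddCommGroup E] [NormedSpace ℝ E] {s : Set E} {m : ℝ} {f g : E → ℝ}
  {w w' u : E}

lemma StrongConvexOn.add_sq_norm_sub_le_of_isMinOn (hf : StrongConvexOn s m f)
    (hw : IsMinOn f s w) (hws : w ∈ s) (hu : u ∈ s) :
    f w + m / 2 * ‖w - u‖ ^ 2 ≤ f u := by
  -- Compare `f w` with `f` on the segment `[w, u]` and let the point slide to `w`.
  have hsegment : ∀ t ∈ Ioo (0 : ℝ) 1, f w + (1 - t) * (m / 2 * ‖w - u‖ ^ 2) ≤ f u := by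
    rintro t ⟨ht0, ht1⟩
    have hconv := hf.2 hws hu (sub_nonneg.2 ht1.le) ht0.le (sub_add_cancel 1 t)
    have hmin : f w ≤ f ((1 - t) • w + t • u) :=
      hw (hf.1 hws hu (sub_nonneg.2 ht1.le) ht0.le (sub_add_cancel 1 t))
    simp only [smul_eq_mul] at hconv
    exact le_of_mul_le_mul_left (by linarith) ht0
  have hlim : Tendsto (fun t : ℝ => f w + (1 - t) * (m / 2 * ‖w - u‖ ^ 2)) (𝓝[>] 0)
      (𝓝 (f w + m / 2 * ‖w - u‖ ^ 2)) := by
    have hcont : Continuous fun t : ℝ => f w + (1 - t) * (m / 2 * ‖w - u‖ ^ 2) := by fun_prop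
    simpa using (hcont.tendsto 0).mono_left nhdsWithin_le_nhds
  exact le_of_tendsto hlim (eventually_of_mem (Ioo_mem_nhdsGT one_pos) hsegment)

lemma StrongConvexOn.norm_sub_le_of_isMinOn {K : NNReal} (hm : 0 < m)
    (hf : StrongConvexOn s m f) (hg : StrongConvexOn s m g) (hfg : LipschitzOnWith K (f - g) s)
    (hw : IsMinOn f s w) (hws : w ∈ s) (hw' : IsMinOn g s w') (hws' : w' ∈ s) :
    ‖w - w'‖ ≤ K / m := by
  have hf_growth := hf.add_sq_norm_sub_le_of_isMinOn hw hws hws'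
  have hg_growth := hg.add_sq_norm_sub_le_of_isMinOn hw' hws' hws
  have hlip := hfg.le_add_mul hws' hws
  rw [norm_sub_rev w' w] at hg_growth
  rw [dist_eq_norm, norm_sub_rev] at hlip
  simp only [Pi.sub_apply] at hlip
  have hquad : m * ‖w - w'‖ * ‖w - w'‖ ≤ K * ‖w - w'‖ := by nlinarith
  rcases (norm_nonneg (w - w')).eq_or_lt with h0 | hpos
  · rw [← h0]; positivity
  · rw [le_div_iff₀ hm, mul_comm]
    exact le_of_mul_le_mul_right hquad hpos

end StrongConvexity

section MarginLoss

variable {E : Type*} [NormedAddCommGroup E] [InnerProductSpace ℝ E]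

def marginLoss (ℓ : ℝ → ℝ) (p : E × ℝ) (u : E) : ℝ := ℓ (p.2 * inner ℝ u p.1)

variable {ℓ : ℝ → ℝ}

lemma convexOn_marginLoss (hℓ : ConvexOn ℝ univ ℓ) (p : E × ℝ) :
    ConvexOn ℝ univ (marginLoss ℓ p) := by
  have h := hℓ.comp_linearMap (p.2 • innerₛₗ ℝ p.1)
  rw [preimage_univ] at h
  exact h.congr fun u _ => by simp [marginLoss, real_inner_comm]

lemma lipschitzWith_marginLoss {K : NNReal} (hℓ : LipschitzWith K ℓ) {p : E × ℝ}
    (hx : ‖p.1‖ ≤ 1) (hy : |p.2| ≤ 1) : LipschitzWith K (marginLoss ℓ p) := by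
  have hmargin : LipschitzWith 1 fun u : E => p.2 * inner ℝ u p.1 := by
    refine LipschitzWith.of_dist_le_mul fun u v => ?_
    rw [Real.dist_eq, ← mul_sub, ← inner_sub_left, abs_mul, NNReal.coe_one, one_mul,
      dist_eq_norm]
    calc |p.2| * |inner ℝ (u - v) p.1| ≤ 1 * (‖u - v‖ * 1) := by
          gcongr
          exact (abs_real_inner_le_norm _ _).trans (by gcongr)
      _ = ‖u - v‖ := by ring
  have h := hℓ.comp hmargin
  rwa [mul_one] at h

end MarginLoss

section RegularizedLoss

variable {E : Type*} [NormedAddCommGroup E] [InnerProductSpace ℝ E] {n : ℕ} {ℓ : ℝ → ℝ}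
  {N : E → ℝ} {lam : ℝ}

noncomputable def regularizedLoss (ℓ : ℝ → ℝ) (N : E → ℝ) (lam : ℝ) (T : Fin n → E × ℝ)
    (u : E) : ℝ :=
  (1 / (n : ℝ)) * ∑ i, marginLoss ℓ (T i) u + lam * N u

lemma strongConvexOn_regularizedLoss (hℓ : ConvexOn ℝ univ ℓ) (hN : StrongConvexOn univ 1 N)
    (hlam : 0 ≤ lam) (T : Fin n → E × ℝ) :
    StrongConvexOn univ lam (regularizedLoss ℓ N lam T) := by
  rw [strongConvexOn_iff_convex] at hN ⊢
  have hsum := (ConvexOn.sum (t := Finset.univ) convex_univ fun i _ =>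
    convexOn_marginLoss hℓ (T i)).smul (c := 1 / (n : ℝ)) (by positivity)
  refine (hsum.add (hN.smul hlam)).congr fun u _ => ?_
  simp only [regularizedLoss, Pi.add_apply, smul_eq_mul]
  ring

lemma lipschitzWith_regularizedLoss_sub (hℓ : LipschitzWith 1 ℓ) {T T' : Fin n → E × ℝ}
    {i₀ : Fin n} (hx : ‖(T i₀).1‖ ≤ 1) (hy : |(T i₀).2| ≤ 1) (hx' : ‖(T' i₀).1‖ ≤ 1)
    (hy' : |(T' i₀).2| ≤ 1) (hTT' : ∀ i ≠ i₀, T i = T' i) :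
    LipschitzWith (2 / n) (regularizedLoss ℓ N lam T - regularizedLoss ℓ N lam T') := by
  have hdiff : regularizedLoss ℓ N lam T - regularizedLoss ℓ N lam T' =
      fun u => (n : ℝ)⁻¹ • (marginLoss ℓ (T i₀) u - marginLoss ℓ (T' i₀) u) := by
    ext u
    have hsum : ∑ i, marginLoss ℓ (T i) u - ∑ i, marginLoss ℓ (T' i) u =
        marginLoss ℓ (T i₀) u - marginLoss ℓ (T' i₀) u := by
      rw [← Finset.sum_sub_distrib]
      exact Finset.sum_eq_single i₀ (fun i _ hi => by rw [hTT' i hi, sub_self]) (by simp)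
    simp only [Pi.sub_apply, regularizedLoss, smul_eq_mul]
    rw [← hsum]
    ring
  have h := (lipschitzWith_smul (n : ℝ)⁻¹).comp
    ((lipschitzWith_marginLoss hℓ hx hy).sub (lipschitzWith_marginLoss hℓ hx' hy'))
  rw [hdiff]
  refine h.weaken (le_of_eq ?_)
  rw [nnnorm_inv, Real.nnnorm_natCast, one_add_one_eq_two, div_eq_inv_mul]

end RegularizedLoss

theorem erm_sensitivity_general {d n : ℕ} (lam : ℝ) (hlam : 0 < lam)
    (N : EuclideanSpace ℝ (Fin d) → ℝ)
    (hNsc : ConvexOn ℝ Set.univ fun w => N w - (1 / 2) * ‖w‖ ^ 2)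
    (ℓ : ℝ → ℝ)
    (hℓconv : ConvexOn ℝ Set.univ ℓ)
    (hℓdiff : Differentiable ℝ ℓ) (hℓ' : ∀ z, |deriv ℓ z| ≤ 1)
    (D D' : Fin n → EuclideanSpace ℝ (Fin d) × ℝ)
    (hD : ∀ i, ‖(D i).1‖ ≤ 1 ∧ ((D i).2 = -1 ∨ (D i).2 = 1))
    (hD' : ∀ i, ‖(D' i).1‖ ≤ 1 ∧ ((D' i).2 = -1 ∨ (D' i).2 = 1))
    (hneighbor : ∃ i₀ : Fin n, ∀ i, i ≠ i₀ → D i = D' i)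
    (J : (Fin n → EuclideanSpace ℝ (Fin d) × ℝ) → EuclideanSpace ℝ (Fin d) → ℝ)
    (hJ : ∀ T w, J T w =
      (1 / (n : ℝ)) * ∑ i, ℓ ((T i).2 * (inner ℝ w (T i).1 : ℝ)) + lam * N w)
    (w w' : EuclideanSpace ℝ (Fin d))
    (hw : ∀ u, J D w ≤ J D u) (hw' : ∀ u, J D' w' ≤ J D' u) :
    ‖w - w'‖ ≤ 2 / (n * lam) := by
  obtain ⟨i₀, hi₀⟩ := hneighbor
  obtain rfl : J = regularizedLoss ℓ N lam := funext fun T => funext (hJ T)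
  have hℓlip : LipschitzWith 1 ℓ := lipschitzWith_of_nnnorm_deriv_le hℓdiff fun z => by
    rw [← NNReal.coe_le_coe, coe_nnnorm, Real.norm_eq_abs, NNReal.coe_one]
    exact hℓ' z
  have hlabel : ∀ y : ℝ, y = -1 ∨ y = 1 → |y| ≤ 1 := by rintro y (rfl | rfl) <;> simp
  have hsc := strongConvexOn_regularizedLoss (n := n) hℓconv (strongConvexOn_iff_convex.2 hNsc)
    hlam.le
  have hlip : LipschitzWith (2 / n) (regularizedLoss ℓ N lam D - regularizedLoss ℓ N lam D') :=
    lipschitzWith_regularizedLoss_sub hℓlip (hD i₀).1 (hlabel _ (hD i₀).2) (hD' i₀).1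
      (hlabel _ (hD' i₀).2) hi₀
  have hbound := (hsc D).norm_sub_le_of_isMinOn hlam (hsc D') hlip.lipschitzOnWith
    (isMinOn_univ_iff.2 hw) (mem_univ w) (isMinOn_univ_iff.2 hw') (mem_univ w')
  rwa [NNReal.coe_div, NNReal.coe_ofNat, NNReal.coe_natCast, div_div] at hbound

/-- **Sensitivity of regularized empirical risk minimization (Chaudhuri–Monteleoni–Sarwate).**
With a differentiable 1-strongly convex regularizer `N`, a convex differentiable loss `ℓ`
with `|ℓ'| ≤ 1`, data points of norm at most 1, and labels in `{-1, +1}`, any two global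
minimizers of the regularized empirical losses of two training sets of size `n` that differ
in a single example are at ℓ2 distance at most `2/(n λ)`. -/
theorem erm_sensitivity {d n : ℕ} (hn : 0 < n) (lam : ℝ) (hlam : 0 < lam)
    (N : EuclideanSpace ℝ (Fin d) → ℝ)
    (hNdiff : Differentiable ℝ N)
    (hNsc : ConvexOn ℝ Set.univ fun w => N w - (1 / 2) * ‖w‖ ^ 2)
    (ℓ : ℝ → ℝ) (hℓ0 : ∀ z, 0 ≤ ℓ z)
    (hℓconv : ConvexOn ℝ Set.univ ℓ)
    (hℓdiff : Differentiable ℝ ℓ) (hℓ' : ∀ z, |deriv ℓ z| ≤ 1)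
    (D D' : Fin n → EuclideanSpace ℝ (Fin d) × ℝ)
    (hD : ∀ i, ‖(D i).1‖ ≤ 1 ∧ ((D i).2 = -1 ∨ (D i).2 = 1))
    (hD' : ∀ i, ‖(D' i).1‖ ≤ 1 ∧ ((D' i).2 = -1 ∨ (D' i).2 = 1))
    (hneighbor : ∃ i₀ : Fin n, ∀ i, i ≠ i₀ → D i = D' i)
    (J : (Fin n → EuclideanSpace ℝ (Fin d) × ℝ) → EuclideanSpace ℝ (Fin d) → ℝ)
    (hJ : ∀ T w, J T w =
      (1 / (n : ℝ)) * ∑ i, ℓ ((T i).2 * (inner ℝ w (T i).1 : ℝ)) + lam * N w)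
    (w w' : EuclideanSpace ℝ (Fin d))
    (hw : ∀ u, J D w ≤ J D u) (hw' : ∀ u, J D' w' ≤ J D' u) :
    ‖w - w'‖ ≤ 2 / (n * lam) :=
  erm_sensitivity_general lam hlam N hNsc ℓ hℓconv hℓdiff hℓ' D D' hD hD' hneighbor J hJ w w' hw hw'
end

section
/- Objective perturbation for regularized ERM is ε-differentially private (Chaudhuri–Monteleoni–Sarwate, Algorithm 1): Fix n ∈ ℕ, λ > 0, ε > 0, c > 0, a regularizer N : ℝ^d → ℝ that is twice differentiable and 1-strongly convex, and a loss ℓ : ℝ → [0,∞) that is convex and twice differentiable with |ℓ'(z)| ≤ 1 and |ℓ''(z)| ≤ c for all z ∈ ℝ. Define ε' = ε − ln(1 + 2c/(nλ) + c²/(n²λ²)); if ε' > 0 set Δ = 0, and otherwise set Δ = c/(n(e^{ε/4} − 1)) − λ and ε' = ε/2. Consider the mechanism M that, on a training set D = {(x_i, y_i)}_{i=1}^n with ‖x_i‖₂ ≤ 1 and y_i ∈ {−1,+1}, samples a noise vector b ∈ ℝ^d with probability density proportional to exp(−(ε'/2)‖b‖₂) and outputs f_priv = argmin_{w} [ (1/n)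 ∑_{i=1}^n ℓ(y_i·⟨w, x_i⟩) + λ·N(w) + (1/n)⟨b, w⟩ + (1/2)Δ‖w‖₂² ]. Then M is ε-differentially private with respect to neighboring training sets: for any two training sets D, D' of size n differing in a single example and every measurable S ⊆ ℝ^d, Pr[M(D) ∈ S] ≤ e^ε · Pr[M(D') ∈ S]. -/
/-!
For a fixed training set `T`, the first-order condition characterizes the output `w` for the
noise `b` by `b = -G_T(w)`, where `G_T` is `n` times the gradient of the unperturbed objective,
a `(nλ + nΔ)`-strongly convex function. So the mechanism applies the inverse of the injective
differentiable map `w ↦ -G_T(w)` to the noise, and by the change of variables formula the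
output has density `|det DG_T(w)| · ρ(G_T(w))`. For neighbouring `D`, `D'` the Hessians `DG_D(w)`,
`DG_{D'}(w)` share everything but one rank-one term `a x xᵀ` with `0 ≤ a ≤ c` and `‖x‖ ≤ 1`, so by
the matrix determinant lemma the determinants differ by a factor at most `1 + c/(nλ + nΔ)`;
the gradients differ by at most `2` in norm, so the noise densities differ by a factor at most
`e^{ε'}`. The choice of `ε'` and `Δ` makes `e^{ε'} (1 + c/(nλ + nΔ)) ≤ e^ε`.
-/

open MeasureTheory InnerProductSpace Set
open scoped RealInnerProductSpace Gradient ENNReal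

variable {E : Type*} [NormedAddCommGroup E] [InnerProductSpace ℝ E]

lemma ContinuousLinearMap.abs_det_neg [FiniteDimensional ℝ E] (A : E →L[ℝ] E) :
    |(-A).det| = |A.det| := by
  rw [← neg_one_smul ℝ A, ContinuousLinearMap.det, ContinuousLinearMap.toLinearMap_smul,
    LinearMap.det_smul, abs_mul, abs_pow, abs_neg, abs_one, one_pow, one_mul]

lemma ContinuousLinearMap.det_one_add_rankOne [FiniteDimensional ℝ E] (u x : E) :
    (1 + rankOne ℝ u x).det = 1 + ⟪x, u⟫ := by
  classical
  let b := stdOrthonormalBasis ℝ E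
  have hmat : LinearMap.toMatrix b.toBasis b.toBasis ((1 + rankOne ℝ u x : E →L[ℝ] E) : E →ₗ[ℝ] E)
      = 1 + Matrix.replicateCol (Fin 1) (b.repr u) * Matrix.replicateRow (Fin 1) (b.repr x) := by
    ext i j
    simp [LinearMap.toMatrix_apply, Matrix.one_apply, Matrix.mul_apply,
      OrthonormalBasis.repr_apply_apply, real_inner_comm, mul_comm]
  rw [ContinuousLinearMap.det, ← LinearMap.det_toMatrix b.toBasis, hmat]
  refine (Matrix.det_one_add_replicateCol_mul_replicateRow _ _).trans ?_
  rw [dotProduct, ← b.repr.inner_map_map x u, PiLp.inner_apply]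
  simp [mul_comm]

lemma ContinuousLinearMap.det_add_smul_rankOne_of_apply_eq [FiniteDimensional ℝ E]
    {B : E →L[ℝ] E} {u x : E} (hu : B u = x) (a : ℝ) :
    (B + a • rankOne ℝ x x).det = B.det * (1 + a * ⟪x, u⟫) := by
  have hfactor : B + a • rankOne ℝ x x = B ∘L (1 + rankOne ℝ (a • u) x) := by
    ext v
    simp [hu, smul_comm a]
  rw [hfactor, ← inner_smul_right, ← det_one_add_rankOne]
  exact LinearMap.det_comp _ _

lemma ContinuousLinearMap.surjective_of_coercive [FiniteDimensional ℝ E] {B : E →L[ℝ] E}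
    {m : ℝ} (hm : 0 < m) (hB : ∀ v, m * ‖v‖ ^ 2 ≤ ⟪B v, v⟫) : Function.Surjective B := by
  refine LinearMap.injective_iff_surjective.mp fun v w hvw => ?_
  have h := hB (v - w)
  rw [map_sub, show (B : E → E) v = B w from hvw, sub_self, inner_zero_left] at h
  have : ‖v - w‖ ^ 2 ≤ 0 := by nlinarith
  simpa [sub_eq_zero] using this

lemma ContinuousLinearMap.exists_det_add_smul_rankOne_eq [FiniteDimensional ℝ E]
    {B : E →L[ℝ] E} {m : ℝ} (hm : 0 < m) (hB : ∀ v, m * ‖v‖ ^ 2 ≤ ⟪B v, v⟫) (x : E) :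
    ∃ q, 0 ≤ q ∧ m * q ≤ ‖x‖ ^ 2 ∧ ∀ a, (B + a • rankOne ℝ x x).det = B.det * (1 + a * q) := by
  obtain ⟨u, hu⟩ := B.surjective_of_coercive hm hB x
  have hlow : m * ‖u‖ ^ 2 ≤ ⟪x, u⟫ := hu ▸ hB u
  have hq0 : 0 ≤ ⟪x, u⟫ := le_trans (by positivity) hlow
  refine ⟨⟪x, u⟫, hq0, ?_, B.det_add_smul_rankOne_of_apply_eq hu⟩
  -- `m ⟪x, u⟫² ≤ m ‖x‖² ‖u‖² ≤ ‖x‖² ⟪x, u⟫`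
  rcases hq0.eq_or_lt with h | h
  · rw [← h, mul_zero]; positivity
  · have hsq : ⟪x, u⟫ ^ 2 ≤ (‖x‖ * ‖u‖) ^ 2 := pow_le_pow_left₀ hq0 (real_inner_le_norm x u) 2
    nlinarith [mul_le_mul_of_nonneg_left hlow (sq_nonneg ‖x‖)]

lemma ContinuousLinearMap.abs_det_le_abs_det_add_smul_rankOne [FiniteDimensional ℝ E]
    {B : E →L[ℝ] E} {m : ℝ} (hm : 0 < m) (hB : ∀ v, m * ‖v‖ ^ 2 ≤ ⟪B v, v⟫) (x : E) {a : ℝ}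
    (ha : 0 ≤ a) : |B.det| ≤ |(B + a • rankOne ℝ x x).det| := by
  obtain ⟨q, hq0, -, hdet⟩ := B.exists_det_add_smul_rankOne_eq hm hB x
  rw [hdet, abs_mul, abs_of_nonneg (by positivity : 0 ≤ 1 + a * q)]
  exact le_mul_of_one_le_right (abs_nonneg _) (le_add_of_nonneg_right (by positivity))

lemma ContinuousLinearMap.abs_det_add_smul_rankOne_le [FiniteDimensional ℝ E]
    {B : E →L[ℝ] E} {m : ℝ} (hm : 0 < m) (hB : ∀ v, m * ‖v‖ ^ 2 ≤ ⟪B v, v⟫) {x : E}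
    (hx : ‖x‖ ≤ 1) {a : ℝ} (ha : 0 ≤ a) :
    |(B + a • rankOne ℝ x x).det| ≤ (1 + a / m) * |B.det| := by
  obtain ⟨q, hq0, hqx, hdet⟩ := B.exists_det_add_smul_rankOne_eq hm hB x
  have haq : a * q ≤ a / m := by
    rw [le_div_iff₀ hm, mul_assoc, mul_comm q]
    exact mul_le_of_le_one_right ha (hqx.trans (pow_le_one₀ (norm_nonneg x) hx))
  rw [hdet, abs_mul, abs_of_nonneg (by positivity : 0 ≤ 1 + a * q), mul_comm]
  gcongr

lemma ConvexOn.inner_apply_self_nonneg_of_hasFDerivAt_gradient [CompleteSpace E] {F : E → ℝ}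
    {g : E → E} {A : E →L[ℝ] E} {w : E} (hF : ConvexOn ℝ univ F) (hg : ∀ x, HasGradientAt F (g x) x)
    (hA : HasFDerivAt g A w) (v : E) : 0 ≤ ⟪A v, v⟫ := by
  let γ := AffineMap.lineMap (k := ℝ) w (w + v)
  have hγ : ∀ t, HasDerivAt γ v t := fun t => by
    simpa using AffineMap.hasDerivAt_lineMap (a := w) (b := w + v) (x := t)
  have hγ0 : γ 0 = w := AffineMap.lineMap_apply_zero _ _
  have hmono : Monotone fun t => ⟪v, g (γ t)⟫ := by
    have hderiv : ∀ t, HasDerivAt (F ∘ γ) ⟪v, g (γ t)⟫ t := fun t => by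
      simpa [real_inner_comm] using ((hg (γ t)).hasFDerivAt).comp_hasDerivAt t (hγ t)
    have hconv : ConvexOn ℝ univ (F ∘ γ) := by simpa using hF.comp_affineMap γ
    rw [← funext fun t => (hderiv t).deriv]
    exact monotoneOn_univ.mp (hconv.monotoneOn_deriv fun t _ => (hderiv t).differentiableAt)
  have hA' : HasDerivAt (fun t => ⟪v, g (γ t)⟫) ⟪v, A v⟫ 0 := by
    rw [← hγ0] at hA
    exact (innerSL ℝ v).hasFDerivAt.comp_hasDerivAt 0 (hA.comp_hasDerivAt 0 (hγ 0))
  simpa [real_inner_comm] using hA'.nonneg_of_monotone hmono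

lemma inner_sub_ge_of_hasFDerivAt {g : E → E} {A : E → E →L[ℝ] E} {m : ℝ}
    (hg : ∀ x, HasFDerivAt g (A x) x) (hA : ∀ x v, m * ‖v‖ ^ 2 ≤ ⟪A x v, v⟫) (x y : E) :
    m * ‖y - x‖ ^ 2 ≤ ⟪g y - g x, y - x⟫ := by
  let γ := AffineMap.lineMap (k := ℝ) x y
  have hγ : ∀ t, HasDerivAt γ (y - x) t := fun t => AffineMap.hasDerivAt_lineMap
  have hderiv : ∀ t, HasDerivAt (fun t => ⟪y - x, g (γ t)⟫ - t * (m * ‖y - x‖ ^ 2))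
      (⟪y - x, A (γ t) (y - x)⟫ - m * ‖y - x‖ ^ 2) t := fun t => by
    have := ((innerSL ℝ (y - x)).hasFDerivAt.comp_hasDerivAt t
      ((hg (γ t)).comp_hasDerivAt t (hγ t))).sub ((hasDerivAt_id t).mul_const (m * ‖y - x‖ ^ 2))
    exact this.congr_deriv (by rw [one_mul]; rfl)
  have hmono := monotone_of_hasDerivAt_nonneg hderiv fun t => by
    simpa [real_inner_comm] using hA (γ t) (y - x)
  have := hmono zero_le_one
  simp only [γ, AffineMap.lineMap_apply_zero, AffineMap.lineMap_apply_one] at this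
  rw [inner_sub_left]
  linarith [real_inner_comm (g y) (y - x), real_inner_comm (g x) (y - x)]

lemma injective_of_hasFDerivAt_of_coercive {g : E → E} {A : E → E →L[ℝ] E} {m : ℝ}
    (hm : 0 < m) (hg : ∀ x, HasFDerivAt g (A x) x) (hA : ∀ x v, m * ‖v‖ ^ 2 ≤ ⟪A x v, v⟫) :
    Function.Injective g := fun x y hxy => by
  have h := inner_sub_ge_of_hasFDerivAt hg hA x y
  rw [hxy, sub_self, inner_zero_left] at h
  have : ‖y - x‖ ^ 2 ≤ 0 := by nlinarith
  simpa [sub_eq_zero, eq_comm] using this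

omit [InnerProductSpace ℝ E] in
lemma map_withDensity_apply_of_leftInverse [NormedSpace ℝ E] [FiniteDimensional ℝ E]
    [MeasurableSpace E] [BorelSpace E] (μ : Measure E) [μ.IsAddHaarMeasure] {f g : E → E}
    {f' : E → E →L[ℝ] E} (hf' : ∀ x, HasFDerivAt f (f' x) x) (hf : Function.Injective f)
    (hfg : Function.LeftInverse f g) (ρ : E → ℝ≥0∞) {s : Set E} (hs : MeasurableSet s) :
    (μ.withDensity ρ).map g s = ∫⁻ x in s, ENNReal.ofReal |(f' x).det| * ρ (f x) ∂μ := by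
  have hf's : ∀ t, ∀ x ∈ t, HasFDerivWithinAt f (f' x) t x := fun t x _ =>
    (hf' x).hasFDerivWithinAt
  have hpre : ∀ t, g ⁻¹' t = f '' t := fun t => by
    ext b
    refine ⟨fun hb => ⟨g b, hb, hfg b⟩, ?_⟩
    rintro ⟨w, hw, rfl⟩
    rwa [mem_preimage, hf (hfg (f w))]
  have hg : Measurable g := fun t ht =>
    hpre t ▸ measurable_image_of_fderivWithin ht (hf's t) hf.injOn
  rw [Measure.map_apply hg hs, withDensity_apply _ (hg hs), hpre,
    lintegral_image_eq_lintegral_abs_det_fderiv_mul μ hs (hf's s) hf.injOn]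

section Gradient

variable [CompleteSpace E]

lemma differentiable_gradient {f : E → ℝ} (h : Differentiable ℝ (fderiv ℝ f)) :
    Differentiable ℝ (∇ f) :=
  ((toDual ℝ E).symm.toLinearIsometry.toContinuousLinearMap :
    StrongDual ℝ E →L[ℝ] E).differentiable.comp h

lemma hasGradientAt_sub_half_norm_sq {f : E → ℝ} (hf : Differentiable ℝ f) (x : E) :
    HasGradientAt (fun w => f w - 1 / 2 * ‖w‖ ^ 2) (∇ f x - x) x := by
  rw [hasGradientAt_iff_hasFDerivAt]
  refine ((hf x).hasFDerivAt.sub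
    ((hasStrictFDerivAt_norm_sq x).hasFDerivAt.const_mul (1 / 2))).congr_fderiv ?_
  ext v
  simp

lemma inner_fderiv_gradient_apply_self_ge {f : E → ℝ} (hf : Differentiable ℝ f)
    (hf' : Differentiable ℝ (fderiv ℝ f))
    (hsc : ConvexOn ℝ univ fun w => f w - 1 / 2 * ‖w‖ ^ 2) (w v : E) :
    ‖v‖ ^ 2 ≤ ⟪fderiv ℝ (∇ f) w v, v⟫ := by
  have h := hsc.inner_apply_self_nonneg_of_hasFDerivAt_gradient (hasGradientAt_sub_half_norm_sq hf)
    ((differentiable_gradient hf' w).hasFDerivAt.sub (hasFDerivAt_id w)) v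
  simpa [inner_sub_left, real_inner_self_eq_norm_sq] using h

end Gradient

section Loss

variable (ℓ : ℝ → ℝ)

noncomputable def lossGrad (z : E × ℝ) (w : E) : E := (z.2 * deriv ℓ (z.2 * ⟪w, z.1⟫)) • z.1

noncomputable def lossHess (z : E × ℝ) (w : E) : E →L[ℝ] E :=
  (deriv (deriv ℓ) (z.2 * ⟪w, z.1⟫) * z.2 ^ 2) • rankOne ℝ z.1 z.1

variable {ℓ}

lemma hasFDerivAt_const_mul_inner (y : ℝ) (x w : E) :
    HasFDerivAt (fun w : E => y * ⟪w, x⟫) (y • innerSL ℝ x) w := by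
  simpa [real_inner_comm] using ((innerSL ℝ x).hasFDerivAt (x := w)).const_mul y

lemma hasFDerivAt_loss (hℓ : Differentiable ℝ ℓ) (z : E × ℝ) (w : E) :
    HasFDerivAt (fun w => ℓ (z.2 * ⟪w, z.1⟫)) (innerSL ℝ (lossGrad ℓ z w)) w := by
  refine ((hℓ _).hasDerivAt.comp_hasFDerivAt w
    (hasFDerivAt_const_mul_inner z.2 z.1 w)).congr_fderiv ?_
  ext v
  simp [lossGrad]
  ring

lemma hasFDerivAt_lossGrad (hℓ' : Differentiable ℝ (deriv ℓ)) (z : E × ℝ) (w : E) :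
    HasFDerivAt (lossGrad ℓ z) (lossHess ℓ z w) w := by
  refine ((((hℓ' _).hasDerivAt.comp_hasFDerivAt w (hasFDerivAt_const_mul_inner z.2 z.1 w)).const_mul
    z.2).smul_const z.1).congr_fderiv ?_
  ext v
  simp [lossHess, smul_smul]
  congr 1
  ring

lemma norm_lossGrad_le (hℓ : ∀ t, |deriv ℓ t| ≤ 1) {z : E × ℝ} (hx : ‖z.1‖ ≤ 1) (hy : |z.2| ≤ 1)
    (w : E) : ‖lossGrad ℓ z w‖ ≤ 1 := by
  rw [lossGrad, norm_smul, Real.norm_eq_abs, abs_mul]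
  exact mul_le_one₀ (mul_le_one₀ hy (abs_nonneg _) (hℓ _)) (norm_nonneg _) hx

end Loss

section ERM

variable [CompleteSpace E] {ι : Type*} [Fintype ι] (α β : ℝ) (N : E → ℝ) (ℓ : ℝ → ℝ)

/-- With `α = nλ` and `β = nΔ`, this is `n` times the gradient of the unperturbed objective. -/
noncomputable def ermGrad (T : ι → E × ℝ) (w : E) : E := α • ∇ N w + β • w + ∑ i, lossGrad ℓ (T i) w

noncomputable def ermHess (T : ι → E × ℝ) (w : E) : E →L[ℝ] E :=
  α • fderiv ℝ (∇ N) w + β • 1 + ∑ i, lossHess ℓ (T i) w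

variable {α β N ℓ}

lemma hasFDerivAt_ermGrad (hN : Differentiable ℝ (fderiv ℝ N)) (hℓ : Differentiable ℝ (deriv ℓ))
    (T : ι → E × ℝ) (w : E) : HasFDerivAt (ermGrad α β N ℓ T) (ermHess α β N ℓ T w) w :=
  ((((differentiable_gradient hN w).hasFDerivAt.const_smul α).add
    ((hasFDerivAt_id w).const_smul β)).add
    (HasFDerivAt.fun_sum fun i _ => hasFDerivAt_lossGrad hℓ (T i) w) :)

lemma ermHess_coercive (hα : 0 ≤ α) {w : E} (hN : ∀ v, ‖v‖ ^ 2 ≤ ⟪fderiv ℝ (∇ N) w v, v⟫)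
    (hℓ : ∀ t, 0 ≤ deriv (deriv ℓ) t) (T : ι → E × ℝ) (v : E) :
    (α + β) * ‖v‖ ^ 2 ≤ ⟪ermHess α β N ℓ T w v, v⟫ := by
  have hloss : 0 ≤ ∑ i, ⟪lossHess ℓ (T i) w v, v⟫ := Finset.sum_nonneg fun i _ => by
    simp only [lossHess, smul_apply, rankOne_apply, inner_smul_left, conj_trivial]
    exact mul_nonneg (mul_nonneg (hℓ _) (sq_nonneg _)) (mul_self_nonneg _)
  simp only [ermHess, add_apply, smul_apply, one_apply_eq_self, sum_apply, inner_add_left,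
    inner_smul_left, sum_inner, conj_trivial, real_inner_self_eq_norm_sq]
  nlinarith [hN v]

lemma ermGrad_eq_add [DecidableEq ι] (T : ι → E × ℝ) (i₀ : ι) (w : E) :
    ermGrad α β N ℓ T w =
      ermGrad α β N ℓ (fun i : {i // i ≠ i₀} => T i) w + lossGrad ℓ (T i₀) w := by
  simp only [ermGrad, Fintype.sum_eq_add_sum_subtype_ne _ i₀]
  abel

lemma ermHess_eq_add [DecidableEq ι] (T : ι → E × ℝ) (i₀ : ι) (w : E) :
    ermHess α β N ℓ T w =
      ermHess α β N ℓ (fun i : {i // i ≠ i₀} => T i) w + lossHess ℓ (T i₀) w := by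
  simp only [ermHess, Fintype.sum_eq_add_sum_subtype_ne _ i₀]
  abel

lemma ermGrad_add_eq_zero_of_isLocalMin (hN : Differentiable ℝ N) (hℓ : Differentiable ℝ ℓ)
    {κ : ℝ} (hκ : κ ≠ 0) (lam Δ : ℝ) (T : ι → E × ℝ) (b : E) {w : E}
    (hw : IsLocalMin (fun w => 1 / κ * ∑ i, ℓ ((T i).2 * ⟪w, (T i).1⟫) + lam * N w +
      1 / κ * ⟪b, w⟫ + 1 / 2 * Δ * ‖w‖ ^ 2) w) :
    ermGrad (κ * lam) (κ * Δ) N ℓ T w + b = 0 := by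
  have hderiv := (((((HasFDerivAt.fun_sum (u := Finset.univ)
    fun i _ => hasFDerivAt_loss hℓ (T i) w).const_mul
    (1 / κ)).add ((hN w).hasFDerivAt.const_mul lam)).add
    ((innerSL ℝ b).hasFDerivAt.const_mul (1 / κ))).add
    ((hasStrictFDerivAt_norm_sq w).hasFDerivAt.const_mul (1 / 2 * Δ)))
  have hzero := hw.hasFDerivAt_eq_zero hderiv
  have key : innerSL ℝ ((1 / κ) • (ermGrad (κ * lam) (κ * Δ) N ℓ T w + b)) = 0 := by
    rw [← hzero]
    ext v
    simp [ermGrad, inner_gradient_left]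
    field_simp
    ring
  rw [← map_zero (innerSL ℝ), innerSL_inj, smul_eq_zero] at key
  exact key.resolve_left (by simpa using hκ)

lemma map_withDensity_apply_eq_lintegral_ermHess [FiniteDimensional ℝ E] [MeasurableSpace E]
    [BorelSpace E] (μ : Measure E) [μ.IsAddHaarMeasure] (hN : Differentiable ℝ N)
    (hN' : Differentiable ℝ (fderiv ℝ N)) (hℓ : Differentiable ℝ ℓ)
    (hℓ' : Differentiable ℝ (deriv ℓ)) {κ : ℝ} (hκ : κ ≠ 0) {lam Δ : ℝ} {T : ι → E × ℝ}
    (hinj : Function.Injective (ermGrad (κ * lam) (κ * Δ) N ℓ T)) {J : E → E → ℝ}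
    (hJ : ∀ b w, J b w = 1 / κ * ∑ i, ℓ ((T i).2 * ⟪w, (T i).1⟫) + lam * N w +
      1 / κ * ⟪b, w⟫ + 1 / 2 * Δ * ‖w‖ ^ 2)
    {out : E → E} (hout : ∀ b u, J b (out b) ≤ J b u) (ρ : E → ℝ≥0∞) {S : Set E}
    (hS : MeasurableSet S) :
    (μ.withDensity ρ).map out S = ∫⁻ w in S, ENNReal.ofReal
      |(ermHess (κ * lam) (κ * Δ) N ℓ T w).det| * ρ (-ermGrad (κ * lam) (κ * Δ) N ℓ T w) ∂μ := by
  have hG := hasFDerivAt_ermGrad (α := κ * lam) (β := κ * Δ) hN' hℓ' T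
  have hinv : Function.LeftInverse (fun w => -ermGrad (κ * lam) (κ * Δ) N ℓ T w) out := fun b =>
    neg_eq_of_add_eq_zero_right <| ermGrad_add_eq_zero_of_isLocalMin hN hℓ hκ lam Δ T b <| by
      rw [← funext (hJ b)]
      exact IsMinOn.isLocalMin (fun u _ => hout b u) Filter.univ_mem
  rw [map_withDensity_apply_of_leftInverse μ (fun w => (hG w).neg) (neg_injective.comp hinj) hinv
    ρ hS]
  simp only [ContinuousLinearMap.abs_det_neg, Pi.neg_apply]

lemma abs_det_ermHess_le_of_forall_ne [FiniteDimensional ℝ E] [DecidableEq ι] (hm : 0 < α + β)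
    (hα : 0 ≤ α) {w : E} (hN : ∀ v, ‖v‖ ^ 2 ≤ ⟪fderiv ℝ (∇ N) w v, v⟫) {c : ℝ}
    (hℓ : ∀ t, 0 ≤ deriv (deriv ℓ) t ∧ deriv (deriv ℓ) t ≤ c) {D D' : ι → E × ℝ} {i₀ : ι}
    (hDD' : ∀ i, i ≠ i₀ → D i = D' i) (hx : ‖(D i₀).1‖ ≤ 1) (hy : |(D i₀).2| ≤ 1) :
    |(ermHess α β N ℓ D w).det| ≤ (1 + c / (α + β)) * |(ermHess α β N ℓ D' w).det| := by
  set B := ermHess α β N ℓ (fun i : {i // i ≠ i₀} => D i) w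
  have hB : ∀ v, (α + β) * ‖v‖ ^ 2 ≤ ⟪B v, v⟫ :=
    ermHess_coercive hα hN (fun t => (hℓ t).1) _
  have hrest : (fun i : {i // i ≠ i₀} => D' i) = fun i : {i // i ≠ i₀} => D i :=
    funext fun i => (hDD' i i.2).symm
  have ha : 0 ≤ deriv (deriv ℓ) ((D i₀).2 * ⟪w, (D i₀).1⟫) * (D i₀).2 ^ 2 :=
    mul_nonneg (hℓ _).1 (sq_nonneg _)
  have hac : deriv (deriv ℓ) ((D i₀).2 * ⟪w, (D i₀).1⟫) * (D i₀).2 ^ 2 ≤ c :=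
    (mul_le_of_le_one_right (hℓ _).1 ((sq_le_one_iff_abs_le_one _).mpr hy)).trans (hℓ _).2
  rw [ermHess_eq_add D i₀, ermHess_eq_add D' i₀, hrest]
  calc |(B + lossHess ℓ (D i₀) w).det|
      ≤ (1 + deriv (deriv ℓ) ((D i₀).2 * ⟪w, (D i₀).1⟫) * (D i₀).2 ^ 2 / (α + β)) * |B.det| :=
        B.abs_det_add_smul_rankOne_le hm hB hx ha
    _ ≤ (1 + c / (α + β)) * |(B + lossHess ℓ (D' i₀) w).det| :=
        mul_le_mul (by gcongr)
          (B.abs_det_le_abs_det_add_smul_rankOne hm hB _ (mul_nonneg (hℓ _).1 (sq_nonneg _)))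
          (abs_nonneg _) (by have := (hℓ 0).1.trans (hℓ 0).2; positivity)

lemma norm_ermGrad_le_of_forall_ne [DecidableEq ι] (hℓ : ∀ t, |deriv ℓ t| ≤ 1)
    {D D' : ι → E × ℝ} {i₀ : ι} (hDD' : ∀ i, i ≠ i₀ → D i = D' i)
    (hx : ‖(D i₀).1‖ ≤ 1) (hy : |(D i₀).2| ≤ 1) (hx' : ‖(D' i₀).1‖ ≤ 1) (hy' : |(D' i₀).2| ≤ 1)
    (w : E) : ‖ermGrad α β N ℓ D' w‖ ≤ ‖ermGrad α β N ℓ D w‖ + 2 := by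
  have hrest : (fun i : {i // i ≠ i₀} => D' i) = fun i : {i // i ≠ i₀} => D i :=
    funext fun i => (hDD' i i.2).symm
  have hdiff : ermGrad α β N ℓ D' w =
      ermGrad α β N ℓ D w + (lossGrad ℓ (D' i₀) w - lossGrad ℓ (D i₀) w) := by
    rw [ermGrad_eq_add D i₀, ermGrad_eq_add D' i₀, hrest]
    abel
  rw [hdiff]
  linarith [norm_add_le (ermGrad α β N ℓ D w) (lossGrad ℓ (D' i₀) w - lossGrad ℓ (D i₀) w),
    norm_sub_le (lossGrad ℓ (D' i₀) w) (lossGrad ℓ (D i₀) w),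
    norm_lossGrad_le hℓ hx hy w, norm_lossGrad_le hℓ hx' hy' w]

end ERM

lemma ofReal_mul_exp_neg_mul_le (k : ℝ) {a r p q : ℝ} (ha : 0 ≤ a) (hpq : q ≤ p + r) :
    ENNReal.ofReal (k * Real.exp (-(a * p))) ≤
      ENNReal.ofReal (Real.exp (a * r)) * ENNReal.ofReal (k * Real.exp (-(a * q))) := by
  rcases le_or_gt k 0 with hk | hk
  · simp [ENNReal.ofReal_of_nonpos (mul_nonpos_of_nonpos_of_nonneg hk (Real.exp_pos _).le)]
  rw [← ENNReal.ofReal_mul (Real.exp_pos _).le, mul_left_comm, ← Real.exp_add]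
  gcongr
  nlinarith

lemma ENNReal.ofReal_mul_le_ofReal_mul_mul {A A' K L : ℝ} {ρ ρ' : ℝ≥0∞} (hK : 0 ≤ K) (hL : 0 ≤ L)
    (hA : A ≤ K * A') (hρ : ρ ≤ ENNReal.ofReal L * ρ') :
    ENNReal.ofReal A * ρ ≤ ENNReal.ofReal (L * K) * (ENNReal.ofReal A' * ρ') :=
  calc ENNReal.ofReal A * ρ ≤ ENNReal.ofReal (K * A') * (ENNReal.ofReal L * ρ') :=
        mul_le_mul' (ENNReal.ofReal_le_ofReal hA) hρ
    _ = ENNReal.ofReal (L * K) * (ENNReal.ofReal A' * ρ') := by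
        rw [ENNReal.ofReal_mul hK, ENNReal.ofReal_mul hL]
        ring

lemma objective_perturbation_budget {n lam ε c ε'₀ ε' Δ : ℝ} (hn : 0 < n) (hlam : 0 < lam)
    (hε : 0 < ε) (hc : 0 < c)
    (hε'₀ : ε'₀ = ε - Real.log (1 + 2 * c / (n * lam) + c ^ 2 / (n ^ 2 * lam ^ 2)))
    (hε' : ε' = if 0 < ε'₀ then ε'₀ else ε / 2)
    (hΔ : Δ = if 0 < ε'₀ then 0 else c / (n * (Real.exp (ε / 4) - 1)) - lam) :
    0 < n * lam + n * Δ ∧ 0 < ε' ∧ Real.exp ε' * (1 + c / (n * lam + n * Δ)) ≤ Real.exp ε := by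
  split_ifs at hε' hΔ with h
  · subst hε' hΔ
    have hκ : 0 < n * lam := mul_pos hn hlam
    have hsq : 1 + 2 * c / (n * lam) + c ^ 2 / (n ^ 2 * lam ^ 2) = (1 + c / (n * lam)) ^ 2 := by
      field_simp
      ring
    have h1 : 1 ≤ 1 + c / (n * lam) := le_add_of_nonneg_right (by positivity)
    refine ⟨by simpa using hκ, h, ?_⟩
    rw [mul_zero, add_zero, hε'₀, Real.exp_sub, Real.exp_log (by positivity), hsq,
      div_mul_eq_mul_div, div_le_iff₀ (by positivity)]
    exact mul_le_mul_of_nonneg_left (le_self_pow₀ h1 two_ne_zero) (Real.exp_pos ε).le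
  · have he : 0 < Real.exp (ε / 4) - 1 := by
      linarith [Real.add_one_lt_exp (x := ε / 4) (by positivity)]
    have hm : n * lam + n * Δ = c / (Real.exp (ε / 4) - 1) := by
      rw [hΔ]
      field_simp
      ring
    refine ⟨hm ▸ by positivity, hε' ▸ by positivity, ?_⟩
    rw [hm, div_div_cancel₀ hc.ne', add_sub_cancel, hε', ← Real.exp_add]
    gcongr
    linarith

theorem objective_perturbation_dp_general {d n : ℕ} (hn : 0 < n) (lam ε c : ℝ)
    (hlam : 0 < lam) (hε : 0 < ε) (hc : 0 < c)
    (N : EuclideanSpace ℝ (Fin d) → ℝ)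
    (hNdiff : Differentiable ℝ N) (hNdiff2 : Differentiable ℝ (fderiv ℝ N))
    (hNsc : ConvexOn ℝ Set.univ fun w => N w - (1 / 2) * ‖w‖ ^ 2)
    (ℓ : ℝ → ℝ)
    (hℓconv : ConvexOn ℝ Set.univ ℓ)
    (hℓdiff : Differentiable ℝ ℓ) (hℓdiff2 : Differentiable ℝ (deriv ℓ))
    (hℓ' : ∀ z, |deriv ℓ z| ≤ 1) (hℓ'' : ∀ z, |deriv (deriv ℓ) z| ≤ c)
    -- the privacy parameter `ε'` and regularization correction `Δ` of Algorithm 1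
    (ε'₀ ε' Δ : ℝ)
    (hε'₀ : ε'₀ = ε - Real.log (1 + 2 * c / (n * lam) + c ^ 2 / (n ^ 2 * lam ^ 2)))
    (hε' : ε' = if 0 < ε'₀ then ε'₀ else ε / 2)
    (hΔ : Δ = if 0 < ε'₀ then 0 else c / (n * (Real.exp (ε / 4) - 1)) - lam)
    -- the perturbed objective
    (Jp : (Fin n → EuclideanSpace ℝ (Fin d) × ℝ) → EuclideanSpace ℝ (Fin d) →
      EuclideanSpace ℝ (Fin d) → ℝ)
    (hJp : ∀ T b w, Jp T b w =
      (1 / (n : ℝ)) * ∑ i, ℓ ((T i).2 * (inner ℝ w (T i).1 : ℝ)) + lam * N w +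
        (1 / (n : ℝ)) * (inner ℝ b w : ℝ) + (1 / 2) * Δ * ‖w‖ ^ 2)
    -- the minimizer of the perturbed objective, given the noise vector `b`
    (fpriv : (Fin n → EuclideanSpace ℝ (Fin d) × ℝ) → EuclideanSpace ℝ (Fin d) →
      EuclideanSpace ℝ (Fin d))
    (hfpriv : ∀ T b u, Jp T b (fpriv T b) ≤ Jp T b u)
    -- the normalizing constant of the noise density
    (C : ℝ)
    -- the objective-perturbation mechanism
    (M : (Fin n → EuclideanSpace ℝ (Fin d) × ℝ) → Measure (EuclideanSpace ℝ (Fin d)))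
    (hM : ∀ T, M T =
      (volume.withDensity fun b =>
        ENNReal.ofReal ((1 / C) * Real.exp (-(ε' / 2 * ‖b‖)))).map fun b => fpriv T b)
    -- neighboring valid training sets
    (D D' : Fin n → EuclideanSpace ℝ (Fin d) × ℝ)
    (hD : ∀ i, ‖(D i).1‖ ≤ 1 ∧ ((D i).2 = -1 ∨ (D i).2 = 1))
    (hD' : ∀ i, ‖(D' i).1‖ ≤ 1 ∧ ((D' i).2 = -1 ∨ (D' i).2 = 1))
    (hneighbor : ∃ i₀ : Fin n, ∀ i, i ≠ i₀ → D i = D' i) :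
    ∀ S : Set (EuclideanSpace ℝ (Fin d)), MeasurableSet S →
      M D S ≤ ENNReal.ofReal (Real.exp ε) * M D' S := by
  intro S hS
  obtain ⟨i₀, hi₀⟩ := hneighbor
  have hnR : (0 : ℝ) < n := Nat.cast_pos.mpr hn
  obtain ⟨hm, hε'pos, hbudget⟩ := objective_perturbation_budget hnR hlam hε hc hε'₀ hε' hΔ
  have hHess := inner_fderiv_gradient_apply_self_ge hNdiff hNdiff2 hNsc
  have hℓ''c : ∀ t, 0 ≤ deriv (deriv ℓ) t ∧ deriv (deriv ℓ) t ≤ c := fun t =>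
    ⟨(monotoneOn_univ.mp (hℓconv.monotoneOn_deriv fun x _ => hℓdiff x)).deriv_nonneg,
      (abs_le.mp (hℓ'' t)).2⟩
  have hinj : ∀ T : Fin n → EuclideanSpace ℝ (Fin d) × ℝ,
      Function.Injective (ermGrad (n * lam) (n * Δ) N ℓ T) := fun T =>
    injective_of_hasFDerivAt_of_coercive hm (hasFDerivAt_ermGrad hNdiff2 hℓdiff2 T) fun w =>
      ermHess_coercive (by positivity) (hHess w) (fun t => (hℓ''c t).1) T
  rw [hM, hM, map_withDensity_apply_eq_lintegral_ermHess volume hNdiff hNdiff2 hℓdiff hℓdiff2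
    hnR.ne' (hinj D) (hJp D) (hfpriv D) _ hS, map_withDensity_apply_eq_lintegral_ermHess volume
    hNdiff hNdiff2 hℓdiff hℓdiff2 hnR.ne' (hinj D') (hJp D') (hfpriv D') _ hS,
    ← lintegral_const_mul' _ _ ENNReal.ofReal_ne_top]
  refine lintegral_mono fun w => ?_
  have hvalid : ∀ z : EuclideanSpace ℝ (Fin d) × ℝ, (z.2 = -1 ∨ z.2 = 1) → |z.2| ≤ 1 := by
    rintro z (h | h) <;> simp [h]
  have hdet := abs_det_ermHess_le_of_forall_ne hm (by positivity) (hHess w) hℓ''c hi₀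
    (hD i₀).1 (hvalid _ (hD i₀).2)
  have hdens := ofReal_mul_exp_neg_mul_le (1 / C) (by positivity : 0 ≤ ε' / 2)
    (norm_ermGrad_le_of_forall_ne (α := n * lam) (β := n * Δ) (N := N) hℓ' hi₀ (hD i₀).1
      (hvalid _ (hD i₀).2) (hD' i₀).1 (hvalid _ (hD' i₀).2) w)
  rw [show ε' / 2 * 2 = ε' by ring] at hdens
  simp only [norm_neg]
  exact (ENNReal.ofReal_mul_le_ofReal_mul_mul (by positivity) (Real.exp_pos ε').le hdet
    hdens).trans (by gcongr)

/-- **Objective perturbation for regularized ERM is `ε`-differentially private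
(Chaudhuri–Monteleoni–Sarwate, Algorithm 1).** With `ε' = ε - ln(1 + 2c/(nλ) + c²/(n²λ²))`
if this is positive (and then `Δ = 0`), and otherwise `ε' = ε/2` and
`Δ = c/(n(e^{ε/4} - 1)) - λ`, the mechanism samples `b` with density proportional to
`exp (-(ε'/2) ‖b‖₂)` and outputs
`argmin_w [(1/n) ∑ ℓ(yᵢ ⟪w, xᵢ⟫) + λ N(w) + (1/n) ⟪b, w⟫ + (1/2) Δ ‖w‖²]`.
It is `ε`-differentially private w.r.t. training sets differing in one example. -/
theorem objective_perturbation_dp {d n : ℕ} (hn : 0 < n) (lam ε c : ℝ)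
    (hlam : 0 < lam) (hε : 0 < ε) (hc : 0 < c)
    (N : EuclideanSpace ℝ (Fin d) → ℝ)
    (hNdiff : Differentiable ℝ N) (hNdiff2 : Differentiable ℝ (fderiv ℝ N))
    (hNsc : ConvexOn ℝ Set.univ fun w => N w - (1 / 2) * ‖w‖ ^ 2)
    (ℓ : ℝ → ℝ) (hℓ0 : ∀ z, 0 ≤ ℓ z)
    (hℓconv : ConvexOn ℝ Set.univ ℓ)
    (hℓdiff : Differentiable ℝ ℓ) (hℓdiff2 : Differentiable ℝ (deriv ℓ))
    (hℓ' : ∀ z, |deriv ℓ z| ≤ 1) (hℓ'' : ∀ z, |deriv (deriv ℓ) z| ≤ c)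
    -- the privacy parameter `ε'` and regularization correction `Δ` of Algorithm 1
    (ε'₀ ε' Δ : ℝ)
    (hε'₀ : ε'₀ = ε - Real.log (1 + 2 * c / (n * lam) + c ^ 2 / (n ^ 2 * lam ^ 2)))
    (hε' : ε' = if 0 < ε'₀ then ε'₀ else ε / 2)
    (hΔ : Δ = if 0 < ε'₀ then 0 else c / (n * (Real.exp (ε / 4) - 1)) - lam)
    -- the perturbed objective
    (Jp : (Fin n → EuclideanSpace ℝ (Fin d) × ℝ) → EuclideanSpace ℝ (Fin d) →
      EuclideanSpace ℝ (Fin d) → ℝ)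
    (hJp : ∀ T b w, Jp T b w =
      (1 / (n : ℝ)) * ∑ i, ℓ ((T i).2 * (inner ℝ w (T i).1 : ℝ)) + lam * N w +
        (1 / (n : ℝ)) * (inner ℝ b w : ℝ) + (1 / 2) * Δ * ‖w‖ ^ 2)
    -- the minimizer of the perturbed objective, given the noise vector `b`
    (fpriv : (Fin n → EuclideanSpace ℝ (Fin d) × ℝ) → EuclideanSpace ℝ (Fin d) →
      EuclideanSpace ℝ (Fin d))
    (hfpriv : ∀ T b u, Jp T b (fpriv T b) ≤ Jp T b u)
    -- the normalizing constant of the noise density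
    (C : ℝ) (hC : C = ∫ b : EuclideanSpace ℝ (Fin d), Real.exp (-(ε' / 2 * ‖b‖)))
    -- the objective-perturbation mechanism
    (M : (Fin n → EuclideanSpace ℝ (Fin d) × ℝ) → Measure (EuclideanSpace ℝ (Fin d)))
    (hM : ∀ T, M T =
      (volume.withDensity fun b =>
        ENNReal.ofReal ((1 / C) * Real.exp (-(ε' / 2 * ‖b‖)))).map fun b => fpriv T b)
    -- neighboring valid training sets
    (D D' : Fin n → EuclideanSpace ℝ (Fin d) × ℝ)
    (hD : ∀ i, ‖(D i).1‖ ≤ 1 ∧ ((D i).2 = -1 ∨ (D i).2 = 1))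
    (hD' : ∀ i, ‖(D' i).1‖ ≤ 1 ∧ ((D' i).2 = -1 ∨ (D' i).2 = 1))
    (hneighbor : ∃ i₀ : Fin n, ∀ i, i ≠ i₀ → D i = D' i) :
    ∀ S : Set (EuclideanSpace ℝ (Fin d)), MeasurableSet S →
      M D S ≤ ENNReal.ofReal (Real.exp ε) * M D' S :=
  objective_perturbation_dp_general hn lam ε c hlam hε hc N hNdiff hNdiff2 hNsc ℓ hℓconv hℓdiff
    hℓdiff2 hℓ' hℓ'' ε'₀ ε' Δ hε'₀ hε' hΔ Jp hJp fpriv hfpriv C M hM D D' hD hD' hneighbor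
end
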